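/- arXiv:1905.09072 — 2 statements merged into one kernel-verified Lean document; each statement's English description precedes it below -/
import Mathlib

section
/- The critical point (0,0) of g(x,y) = x² + y³ is removable: there exist open neighborhoods U, V ⊆ ℝ² of (0,0), a homeomorphism h : U → V, a homeomorphism k : ℝ → ℝ, and a smooth function F : ℝ² → ℝ having no critical points (fderiv ℝ F p ≠ 0 for all p), such that g(x) = k(F(h(x))) for every x ∈ U. -/
noncomputable def cubeIso : ℝ ≃o ℝ :=
  StrictMono.orderIsoOfSurjective (fun x : ℝ => x ^ 3)
    (Odd.strictMono_pow (⟨1, by norm_num⟩))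
    (by
      apply Continuous.surjective (by continuity)
      · exact Filter.tendsto_pow_atTop (by norm_num)
      · have h : (fun x : ℝ => x ^ 3) = fun x : ℝ => -((-x) ^ 3) := by
          funext x; ring
        rw [h]
        exact (Filter.tendsto_neg_atTop_atBot).comp
          ((Filter.tendsto_pow_atTop (by norm_num : (3:ℕ) ≠ 0)).comp Filter.tendsto_neg_atBot_atTop))

noncomputable def Hmap : ℝ × ℝ ≃ₜ ℝ × ℝ where
  toFun p := (p.1, p.1 ^ 2 + p.2 ^ 3)
  invFun p := (p.1, cubeIso.symm (p.2 - p.1 ^ 2))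
  left_inv p := by
    simp only
    have : cubeIso.symm (p.1 ^ 2 + p.2 ^ 3 - p.1 ^ 2) = p.2 := by
      have : p.1 ^ 2 + p.2 ^ 3 - p.1 ^ 2 = cubeIso p.2 := by
        show _ = p.2 ^ 3; ring
      rw [this, OrderIso.symm_apply_apply]
    rw [this]
  right_inv p := by
    simp only
    have : (cubeIso.symm (p.2 - p.1 ^ 2)) ^ 3 = p.2 - p.1 ^ 2 :=
      cubeIso.apply_symm_apply _
    rw [this]; ext <;> simp
  continuous_toFun := by fun_prop
  continuous_invFun := by
    apply Continuous.prodMk continuous_fst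
    exact cubeIso.symm.toHomeomorph.continuous.comp (by fun_prop)

/-- The critical point `(0,0)` of `g(x,y) = x² + y³` is removable: on some neighborhood
of `(0,0)`, `g` is topologically equivalent to a smooth function without critical points. -/
theorem stmt_2 :
    ∃ (U V : Set (ℝ × ℝ)), IsOpen U ∧ IsOpen V ∧ ((0 : ℝ), (0 : ℝ)) ∈ U ∧
      ((0 : ℝ), (0 : ℝ)) ∈ V ∧
      ∃ (h : U ≃ₜ V) (k : ℝ ≃ₜ ℝ) (F : ℝ × ℝ → ℝ),
        ContDiff ℝ (⊤ : ℕ∞) F ∧ (∀ p : ℝ × ℝ, fderiv ℝ F p ≠ 0) ∧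
        ∀ x : U, (x : ℝ × ℝ).1 ^ 2 + (x : ℝ × ℝ).2 ^ 3 = k (F (h x)) := by
  refine ⟨Set.univ, Set.univ, isOpen_univ, isOpen_univ, trivial, trivial, ?_⟩
  refine ⟨(Homeomorph.Set.univ _).trans (Hmap.trans (Homeomorph.Set.univ _).symm),
    Homeomorph.refl ℝ, Prod.snd, contDiff_snd, ?_, ?_⟩
  · intro p hp
    have : fderiv ℝ (Prod.snd : ℝ × ℝ → ℝ) p = ContinuousLinearMap.snd ℝ ℝ ℝ := by
      exact hasFDerivAt_snd.fderiv
    rw [this] at hp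
    have := congrArg (fun L : ℝ × ℝ →L[ℝ] ℝ => L (0, 1)) hp
    simp at this
  · intro x
    rfl
end

section
/- For q(x,y,z) = x² + y² − z², the subspace {v ∈ ℝ³ : ‖v‖ = 1 and q(v) ≠ 0} of the unit sphere has exactly three connected components (its set of connected components is a three-element set). -/
/-!
On the unit sphere `x² + y² − z² = 1 − 2z²`, so the quadric cuts the sphere in the two latitude
circles `z = ±c` with `c² = 1/2`. What remains splits by height into two polar caps and an
equatorial band; the height zone is locally constant there, and each zone is connected: a cap is
the radial projection of a ball cut by a half-space, which is convex, and the band is the image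
of a circle times an interval.
-/

open Metric Set Function

local notation "ℝ³" => EuclideanSpace ℝ (Fin 3)

theorem Continuous.connectedComponentsLift_bijective {X ι : Type*} [TopologicalSpace X]
    [TopologicalSpace ι] [TotallyDisconnectedSpace ι] {f : X → ι} (hf : Continuous f)
    (hsurj : Surjective f) (hfib : ∀ i, IsPreconnected (f ⁻¹' {i})) :
    Bijective hf.connectedComponentsLift := by
  refine ⟨fun a b hab => ?_, fun i => ?_⟩
  · obtain ⟨x, rfl⟩ := ConnectedComponents.surjective_coe a
    obtain ⟨y, rfl⟩ := ConnectedComponents.surjective_coe b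
    simp only [hf.connectedComponentsLift_apply_coe] at hab
    exact ConnectedComponents.coe_eq_coe'.2 ((hfib (f y)).subset_connectedComponent rfl hab)
  · obtain ⟨x, rfl⟩ := hsurj i
    exact ⟨x, hf.connectedComponentsLift_apply_coe x⟩

theorem isPreconnected_preimage_subtypeVal {Y : Type*} [TopologicalSpace Y] {p : Y → Prop}
    {s : Set Y} (hs : IsPreconnected s) (hsp : ∀ y ∈ s, p y) :
    IsPreconnected ((Subtype.val : Subtype p → Y) ⁻¹' s) := by
  rwa [← Topology.IsEmbedding.subtypeVal.isPreconnected_image,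
    image_preimage_eq_of_subset (by rwa [Subtype.range_coe_subtype])]

theorem isPreconnected_sphere_inter_lt {E : Type*} [NormedAddCommGroup E] [NormedSpace ℝ E]
    (ℓ : E →L[ℝ] ℝ) {c : ℝ} (hc : 0 ≤ c) :
    IsPreconnected (sphere (0 : E) 1 ∩ {v | c < ℓ v}) := by
  set D := closedBall (0 : E) 1 ∩ {w | c < ℓ w}
  have hD0 : ∀ w ∈ D, 0 < ‖w‖ := by
    rintro w ⟨-, hw⟩
    refine norm_pos_iff.2 fun h => ?_
    simp only [h, mem_ofPred_eq, map_zero] at hw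
    linarith
  have hcap : sphere (0 : E) 1 ∩ {v | c < ℓ v} = (fun w => ‖w‖⁻¹ • w) '' D := by
    refine Subset.antisymm (fun v hv => ⟨v, ⟨sphere_subset_closedBall hv.1, hv.2⟩, ?_⟩) ?_
    · simp [mem_sphere_zero_iff_norm.1 hv.1]
    rintro _ ⟨w, hw, rfl⟩
    have hn := hD0 w hw
    refine ⟨by simp [norm_smul, hn.ne'], ?_⟩
    calc c < ℓ w := hw.2
      _ ≤ ‖w‖⁻¹ * ℓ w := le_mul_of_one_le_left (hc.trans hw.2.le)
          ((one_le_inv₀ hn).2 (mem_closedBall_zero_iff.1 hw.1))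
      _ = ℓ (‖w‖⁻¹ • w) := by simp
  rw [hcap]
  exact ((convex_closedBall 0 1).inter (convex_halfSpace_gt ℓ.isLinear c)).isPreconnected.image _
    ((continuousOn_id.norm.inv₀ fun w hw => (hD0 w hw).ne').smul continuousOn_id)

theorem EuclideanSpace.mem_sphere_zero_one_iff_fin_two {u : EuclideanSpace ℝ (Fin 2)} :
    u ∈ sphere 0 1 ↔ u 0 ^ 2 + u 1 ^ 2 = 1 := by
  simp [EuclideanSpace.sphere_zero_eq, Fin.sum_univ_two]

theorem EuclideanSpace.mem_sphere_zero_one_iff_fin_three {v : ℝ³} :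
    v ∈ sphere 0 1 ↔ v 0 ^ 2 + v 1 ^ 2 + v 2 ^ 2 = 1 := by
  simp [EuclideanSpace.sphere_zero_eq, Fin.sum_univ_three]

open EuclideanSpace in
theorem isPreconnected_sphere_inter_height_mem_Ioo {c : ℝ} (hc : c ≤ 1) :
    IsPreconnected (sphere (0 : ℝ³) 1 ∩ {v | v 2 ∈ Ioo (-c) c}) := by
  let Φ : EuclideanSpace ℝ (Fin 2) × ℝ → ℝ³ := fun p =>
    !₂[√(1 - p.2 ^ 2) * p.1 0, √(1 - p.2 ^ 2) * p.1 1, p.2]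
  have hΦ : Continuous Φ := (PiLp.continuous_toLp 2 _).comp (by fun_prop)
  have hband : sphere (0 : ℝ³) 1 ∩ {v | v 2 ∈ Ioo (-c) c} = Φ '' (sphere 0 1 ×ˢ Ioo (-c) c) := by
    refine Subset.antisymm (fun v ⟨hv, ht⟩ => ?_) ?_
    · rw [mem_sphere_zero_one_iff_fin_three] at hv
      have ht1 : v 2 ^ 2 < 1 := by
        rw [sq_lt_one_iff_abs_lt_one]; exact (abs_lt.2 ht).trans_le hc
      have hs : 0 < √(1 - v 2 ^ 2) := Real.sqrt_pos.2 (by linarith)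
      have hs2 : √(1 - v 2 ^ 2) ^ 2 = 1 - v 2 ^ 2 := Real.sq_sqrt (by linarith)
      refine ⟨(!₂[v 0 / √(1 - v 2 ^ 2), v 1 / √(1 - v 2 ^ 2)], v 2), ⟨?_, ht⟩, ?_⟩
      · rw [mem_sphere_zero_one_iff_fin_two]
        simp only [Matrix.cons_val_zero, Matrix.cons_val_one]
        rw [div_pow, div_pow, hs2, ← add_div, div_eq_one_iff_eq (by linarith)]
        linarith
      · ext i
        fin_cases i <;>
          simp only [Φ, Fin.isValue, Fin.zero_eta, Fin.mk_one, Fin.reduceFinMk, Matrix.cons_val,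
            Matrix.cons_val_zero, Matrix.cons_val_one, Matrix.cons_val_fin_one] <;>
          field_simp
    · rintro _ ⟨⟨u, t⟩, ⟨hu, ht⟩, rfl⟩
      rw [mem_sphere_zero_one_iff_fin_two] at hu
      have ht1 : t ^ 2 ≤ 1 := by
        rw [sq_le_one_iff_abs_le_one]; exact (abs_lt.2 ht).le.trans hc
      refine ⟨?_, by simpa [Φ] using ht⟩
      rw [mem_sphere_zero_one_iff_fin_three]
      simp only [Φ, Matrix.cons_val_zero, Matrix.cons_val_one, Matrix.cons_val_two, Matrix.tail_cons,
        Matrix.head_cons, mul_pow, Real.sq_sqrt (sub_nonneg.2 ht1)]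
      linear_combination (1 - t ^ 2) * hu
  rw [hband]
  refine ((isConnected_sphere ?_ 0 zero_le_one).isPreconnected.prod isPreconnected_Ioo).image
    _ hΦ.continuousOn
  rw [← Module.finrank_eq_rank, finrank_euclideanSpace_fin]
  exact Nat.one_lt_ofNat

def heightInterval (c : ℝ) : Fin 3 → Set ℝ := ![Iio (-c), Ioo (-c) c, Ioi c]

noncomputable def heightZone (c t : ℝ) : Fin 3 := if t < -c then 0 else if t < c then 1 else 2

section heightInterval

variable {c t : ℝ}

theorem heightZone_eq_iff (hc : 0 ≤ c) (htc : t ≠ c) (htc' : t ≠ -c) (i : Fin 3) :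
    heightZone c t = i ↔ t ∈ heightInterval c i := by
  fin_cases i <;>
    simp only [heightZone, heightInterval, Fin.isValue, Fin.zero_eta, Fin.mk_one, Fin.reduceFinMk,
      Matrix.cons_val, Matrix.cons_val_zero, Matrix.cons_val_one, mem_Iio, mem_Ioo, mem_Ioi] <;>
    split_ifs <;> grind

theorem ne_of_mem_heightInterval (hc : 0 ≤ c) {i : Fin 3} (ht : t ∈ heightInterval c i) :
    t ≠ c ∧ t ≠ -c := by
  fin_cases i <;>
    simp only [heightInterval, Fin.isValue, Fin.zero_eta, Fin.mk_one, Fin.reduceFinMk,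
      Matrix.cons_val, Matrix.cons_val_zero, Matrix.cons_val_one, mem_Iio, mem_Ioo, mem_Ioi] at ht <;>
    grind

theorem isOpen_heightInterval (c : ℝ) (i : Fin 3) : IsOpen (heightInterval c i) := by
  fin_cases i
  exacts [isOpen_Iio, isOpen_Ioo, isOpen_Ioi]

theorem exists_norm_eq_one_height_mem_heightInterval (hc0 : 0 < c) (hc1 : c < 1) (i : Fin 3) :
    ∃ v : ℝ³, ‖v‖ = 1 ∧ v 2 ∈ heightInterval c i := by
  fin_cases i
  · exact ⟨!₂[0, 0, -1], by simp [EuclideanSpace.norm_eq, Fin.sum_univ_three],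
      by simpa [heightInterval]⟩
  · exact ⟨!₂[1, 0, 0], by simp [EuclideanSpace.norm_eq, Fin.sum_univ_three],
      by simpa [heightInterval]⟩
  · exact ⟨!₂[0, 0, 1], by simp [EuclideanSpace.norm_eq, Fin.sum_univ_three],
      by simpa [heightInterval]⟩

theorem isPreconnected_sphere_inter_height_mem_heightInterval (hc0 : 0 ≤ c) (hc1 : c ≤ 1)
    (i : Fin 3) : IsPreconnected (sphere (0 : ℝ³) 1 ∩ {v | v 2 ∈ heightInterval c i}) := by
  fin_cases i
  · simpa [heightInterval, lt_neg] using
      isPreconnected_sphere_inter_lt (-EuclideanSpace.proj (2 : Fin 3)) hc0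
  · exact isPreconnected_sphere_inter_height_mem_Ioo hc1
  · exact isPreconnected_sphere_inter_lt (EuclideanSpace.proj (2 : Fin 3)) hc0

end heightInterval

theorem nonempty_connectedComponents_sphere_off_latitudes_equiv {c : ℝ} (hc0 : 0 < c)
    (hc1 : c < 1) {p : ℝ³ → Prop} (hp : ∀ v, p v ↔ ‖v‖ = 1 ∧ v 2 ≠ c ∧ v 2 ≠ -c) :
    Nonempty (ConnectedComponents (Subtype p) ≃ Fin 3) := by
  let height : Subtype p → ℝ := fun v => v.1 2
  have hfib (i : Fin 3) : heightZone c ∘ height ⁻¹' {i} = height ⁻¹' heightInterval c i :=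
    ext fun v => heightZone_eq_iff hc0.le ((hp v).1 v.2).2.1 ((hp v).1 v.2).2.2 i
  have hf : Continuous (heightZone c ∘ height) := (IsLocallyConstant.iff_isOpen_fiber.2 fun i =>
    hfib i ▸ (isOpen_heightInterval c i).preimage (by fun_prop)).continuous
  refine ⟨.ofBijective _ (hf.connectedComponentsLift_bijective (fun i => ?_) fun i => ?_)⟩
  · obtain ⟨v, hv, hvi⟩ := exists_norm_eq_one_height_mem_heightInterval hc0 hc1 i
    exact ⟨⟨v, (hp v).2 ⟨hv, ne_of_mem_heightInterval hc0.le hvi⟩⟩, (hfib i).symm.subset hvi⟩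
  · have hzone : height ⁻¹' heightInterval c i =
        Subtype.val ⁻¹' (sphere 0 1 ∩ {v | v 2 ∈ heightInterval c i}) :=
      ext fun v => (and_iff_right (mem_sphere_zero_iff_norm.2 ((hp v).1 v.2).1)).symm
    rw [hfib i, hzone]
    exact isPreconnected_preimage_subtypeVal
      (isPreconnected_sphere_inter_height_mem_heightInterval hc0.le hc1.le i)
      fun v ⟨hv, hvi⟩ => (hp v).2 ⟨mem_sphere_zero_iff_norm.1 hv, ne_of_mem_heightInterval hc0.le hvi⟩

theorem sq_add_sq_sub_sq_ne_zero_iff {v : ℝ³} (hv : ‖v‖ = 1) {c : ℝ} (hc : c ^ 2 = 1 / 2) :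
    v 0 ^ 2 + v 1 ^ 2 - v 2 ^ 2 ≠ 0 ↔ v 2 ≠ c ∧ v 2 ≠ -c := by
  have hq : v 0 ^ 2 + v 1 ^ 2 - v 2 ^ 2 = 2 * (c ^ 2 - v 2 ^ 2) := by
    linear_combination
      EuclideanSpace.mem_sphere_zero_one_iff_fin_three.1 (mem_sphere_zero_iff_norm.2 hv) - 2 * hc
  rw [hq, ← not_or, ← sq_eq_sq_iff_eq_or_eq_neg]
  grind

/-- For `q(x,y,z) = x² + y² − z²`, the part of the unit sphere where `q ≠ 0` has exactly
three connected components. -/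
theorem stmt_6 :
    Nonempty
      (ConnectedComponents
          {v : EuclideanSpace ℝ (Fin 3) // ‖v‖ = 1 ∧ v 0 ^ 2 + v 1 ^ 2 - v 2 ^ 2 ≠ 0} ≃
        Fin 3) := by
  obtain ⟨c, hc0, hc⟩ : ∃ c : ℝ, 0 < c ∧ c ^ 2 = 1 / 2 :=
    ⟨√(1 / 2), by positivity, Real.sq_sqrt (by norm_num)⟩
  exact nonempty_connectedComponents_sphere_off_latitudes_equiv hc0 (by nlinarith) fun v =>
    and_congr_right fun hv => sq_add_sq_sub_sq_ne_zero_iff hv hc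
end
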